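/- arXiv:1205.4442 — 2 statements merged into one kernel-verified Lean document; each statement's English description precedes it below -/
import Mathlib

section
/- Let u: [0,1] → ℝ³ be a continuous function satisfying u(0) = (1,0,0), u(1) = (0,1,0), u(t/2) = M_0·u(t) and u((t+1)/2) = M_1·u(t) for all t ∈ [0,1]. Then for all s, t ∈ [0,1], ‖u(s) − u(t)‖ ≤ C·|s − t|^α where α = ln(3/5)/ln(1/2) and C is some constant; in particular u is Hölder continuous with exponent log₂(5/3). -/
/-!
Since `M0` preserves the coordinate sum `σ`, `σ (u t) = σ (u (t / 2 ^ n)) → σ (u 0)`, so `σ ∘ u` is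
constant on `[0, 1]` and every difference `u s - u t` lies in the plane `σ = 0`, on which `M0` and
`M1` are `3/5`-contractions. Pulling a dyadic interval of length `2⁻ⁿ` back to `[0, 1]` through the
two half-maps shows that `u` oscillates by at most `D (3/5)ⁿ` on it, `D` the diameter of `u [0, 1]`.
Two adjacent such intervals cover any `s, t` with `|s - t| ≤ 2⁻ⁿ`, and `(3/5)ⁿ = (2⁻ⁿ) ^ α`.
-/

noncomputable def M0 : Matrix (Fin 3) (Fin 3) ℝ :=
  (1/5 : ℝ) • !![5, 2, 2; 0, 2, 1; 0, 1, 2]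

noncomputable def M1 : Matrix (Fin 3) (Fin 3) ℝ :=
  (1/5 : ℝ) • !![2, 0, 1; 2, 5, 2; 1, 0, 2]

/-- Euclidean norm on ℝ³. -/
noncomputable def norm2 (v : Fin 3 → ℝ) : ℝ :=
  Real.sqrt (v 0 ^ 2 + v 1 ^ 2 + v 2 ^ 2)

open Set

def dyadicInterval (n k : ℕ) : Set ℝ :=
  Icc (k / 2 ^ n) ((k + 1) / 2 ^ n)

section DyadicInterval

variable {n k : ℕ} {s : ℝ}

lemma two_mul_mem_dyadicInterval (hs : s ∈ dyadicInterval (n + 1) k) :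
    2 * s ∈ dyadicInterval n k := by
  obtain ⟨h₁, h₂⟩ := hs
  rw [pow_succ, ← div_div] at h₁ h₂
  constructor <;> linarith

lemma two_mul_sub_one_mem_dyadicInterval (hs : s ∈ dyadicInterval (n + 1) (k + 2 ^ n)) :
    2 * s - 1 ∈ dyadicInterval n k := by
  obtain ⟨h₁, h₂⟩ := two_mul_mem_dyadicInterval hs
  have h2n : (2 : ℝ) ^ n / 2 ^ n = 1 := div_self (by positivity)
  push_cast at h₁ h₂
  rw [add_div, h2n] at h₁
  rw [add_right_comm, add_div _ (2 ^ n : ℝ), h2n] at h₂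
  constructor <;> linarith

lemma le_half_of_mem_dyadicInterval (hk : k < 2 ^ n) (hs : s ∈ dyadicInterval (n + 1) k) :
    s ≤ 1 / 2 := by
  have hk' : (k : ℝ) + 1 ≤ 2 ^ n := by exact_mod_cast hk
  calc s ≤ (k + 1) / 2 ^ (n + 1) := hs.2
    _ ≤ 2 ^ n / 2 ^ (n + 1) := by gcongr
    _ = 1 / 2 := by field_simp; ring

lemma half_le_of_mem_dyadicInterval (hs : s ∈ dyadicInterval (n + 1) (k + 2 ^ n)) :
    1 / 2 ≤ s := by
  calc 1 / 2 = (2 ^ n : ℝ) / 2 ^ (n + 1) := by field_simp; ring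
    _ ≤ ((k + 2 ^ n : ℕ) : ℝ) / 2 ^ (n + 1) := by gcongr; push_cast; exact le_add_of_nonneg_left k.cast_nonneg
    _ ≤ s := hs.1

lemma mem_dyadicInterval_floor (n : ℕ) (hs : 0 ≤ s) : s ∈ dyadicInterval n ⌊2 ^ n * s⌋₊ := by
  constructor
  · rw [div_le_iff₀ (by positivity), mul_comm]
    exact Nat.floor_le (by positivity)
  · rw [le_div_iff₀ (by positivity), mul_comm]
    exact (Nat.lt_floor_add_one _).le

end DyadicInterval

lemma rpow_log_div_log_half {q : ℝ} (hq : 0 < q) (n : ℕ) :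
    ((1 / 2 : ℝ) ^ n) ^ (Real.log q / Real.log (1 / 2)) = q ^ n := by
  rw [← Real.rpow_pow_comm (by norm_num)]
  change ((1 / 2 : ℝ) ^ Real.logb (1 / 2) q) ^ n = q ^ n
  rw [Real.rpow_logb (by norm_num) (by norm_num) hq]

section SelfSimilar

variable {X : Type*} [PseudoMetricSpace X] {f : ℝ → X} {q D : ℝ}

lemma dist_le_of_mem_dyadicInterval (hq : 0 ≤ q)
    (hD : ∀ s ∈ Icc (0 : ℝ) 1, ∀ t ∈ Icc (0 : ℝ) 1, dist (f s) (f t) ≤ D)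
    (hleft : ∀ s ∈ Icc (0 : ℝ) 1, ∀ t ∈ Icc (0 : ℝ) 1,
      dist (f (s / 2)) (f (t / 2)) ≤ q * dist (f s) (f t))
    (hright : ∀ s ∈ Icc (0 : ℝ) 1, ∀ t ∈ Icc (0 : ℝ) 1,
      dist (f ((s + 1) / 2)) (f ((t + 1) / 2)) ≤ q * dist (f s) (f t))
    (n k : ℕ) {s t : ℝ} (hs : s ∈ Icc 0 1 ∩ dyadicInterval n k)
    (ht : t ∈ Icc 0 1 ∩ dyadicInterval n k) :
    dist (f s) (f t) ≤ D * q ^ n := by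
  induction n generalizing k s t with
  | zero => simpa using hD s hs.1 t ht.1
  | succ n ih =>
    rcases lt_or_ge k (2 ^ n) with hk | hk
    · have rescale {x : ℝ} (hx : x ∈ Icc 0 1 ∩ dyadicInterval (n + 1) k) :
          2 * x ∈ Icc 0 1 ∩ dyadicInterval n k :=
        ⟨⟨by linarith [hx.1.1], by linarith [le_half_of_mem_dyadicInterval hk hx.2]⟩,
          two_mul_mem_dyadicInterval hx.2⟩
      calc dist (f s) (f t) = dist (f (2 * s / 2)) (f (2 * t / 2)) := by
            rw [mul_div_cancel_left₀ s two_ne_zero, mul_div_cancel_left₀ t two_ne_zero]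
        _ ≤ q * dist (f (2 * s)) (f (2 * t)) := hleft _ (rescale hs).1 _ (rescale ht).1
        _ ≤ q * (D * q ^ n) := by gcongr; exact ih k (rescale hs) (rescale ht)
        _ = D * q ^ (n + 1) := by ring
    · obtain ⟨j, rfl⟩ := Nat.exists_eq_add_of_le' hk
      have rescale {x : ℝ} (hx : x ∈ Icc 0 1 ∩ dyadicInterval (n + 1) (j + 2 ^ n)) :
          2 * x - 1 ∈ Icc 0 1 ∩ dyadicInterval n j :=
        ⟨⟨by linarith [half_le_of_mem_dyadicInterval hx.2], by linarith [hx.1.2]⟩,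
          two_mul_sub_one_mem_dyadicInterval hx.2⟩
      calc dist (f s) (f t) = dist (f ((2 * s - 1 + 1) / 2)) (f ((2 * t - 1 + 1) / 2)) := by
            simp only [sub_add_cancel, mul_div_cancel_left₀ _ (two_ne_zero (α := ℝ))]
        _ ≤ q * dist (f (2 * s - 1)) (f (2 * t - 1)) :=
            hright _ (rescale hs).1 _ (rescale ht).1
        _ ≤ q * (D * q ^ n) := by gcongr; exact ih j (rescale hs) (rescale ht)
        _ = D * q ^ (n + 1) := by ring

section DyadicBound

variable (hdyadic : ∀ n k : ℕ, ∀ s ∈ Icc 0 1 ∩ dyadicInterval n k,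
  ∀ t ∈ Icc 0 1 ∩ dyadicInterval n k, dist (f s) (f t) ≤ D * q ^ n)
include hdyadic

lemma dist_le_of_sub_le_half_pow {n : ℕ} {s t : ℝ} (hs : s ∈ Icc 0 1) (ht : t ∈ Icc 0 1)
    (hst : s ≤ t) (hts : t - s ≤ (1 / 2) ^ n) :
    dist (f s) (f t) ≤ 2 * (D * q ^ n) := by
  set k := ⌊2 ^ n * s⌋₊
  have hsk : s ∈ dyadicInterval n k := mem_dyadicInterval_floor n hs.1
  have hbound : 0 ≤ D * q ^ n := dist_nonneg.trans (hdyadic n k s ⟨hs, hsk⟩ s ⟨hs, hsk⟩)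
  by_cases htk : t ≤ (k + 1) / 2 ^ n
  · linarith [hdyadic n k s ⟨hs, hsk⟩ t ⟨ht, hsk.1.trans hst, htk⟩]
  rw [not_le] at htk
  set m : ℝ := (k + 1) / 2 ^ n with hm_def
  have hm : m ∈ Icc 0 1 := ⟨by positivity, htk.le.trans ht.2⟩
  have hmk : m ∈ dyadicInterval n k := ⟨by rw [hm_def]; gcongr; linarith, le_rfl⟩
  have hmk' : m ∈ dyadicInterval n (k + 1) :=
    ⟨by push_cast; rfl, by rw [hm_def]; push_cast; gcongr; linarith⟩
  have htk' : t ∈ dyadicInterval n (k + 1) := by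
    refine ⟨by push_cast; exact htk.le, ?_⟩
    calc t ≤ s + (1 / 2) ^ n := by linarith
      _ ≤ m + 1 / 2 ^ n := by rw [one_div_pow]; linarith [hsk.2]
      _ = ((k + 1 : ℕ) + 1) / 2 ^ n := by push_cast; ring
  calc dist (f s) (f t) ≤ dist (f s) (f m) + dist (f m) (f t) := dist_triangle _ _ _
    _ ≤ D * q ^ n + D * q ^ n := add_le_add (hdyadic n k s ⟨hs, hsk⟩ m ⟨hm, hmk⟩)
        (hdyadic n (k + 1) m ⟨hm, hmk'⟩ t ⟨ht, htk'⟩)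
    _ = 2 * (D * q ^ n) := by ring

lemma dist_le_mul_abs_sub_rpow (hq0 : 0 < q) (hq1 : q ≤ 1) {s t : ℝ}
    (hs : s ∈ Icc 0 1) (ht : t ∈ Icc 0 1) :
    dist (f s) (f t) ≤ 2 * D / q * |s - t| ^ (Real.log q / Real.log (1 / 2)) := by
  wlog hst : s ≤ t generalizing s t
  · rw [dist_comm, abs_sub_comm]
    exact this ht hs (le_of_not_ge hst)
  have hα : 0 ≤ Real.log q / Real.log (1 / 2) :=
    div_nonneg_of_nonpos (Real.log_nonpos hq0.le hq1) (Real.log_nonpos (by norm_num) (by norm_num))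
  have hD : 0 ≤ D := by
    have h0 : (0 : ℝ) ∈ Icc 0 1 ∩ dyadicInterval 0 0 := by simp [dyadicInterval]
    simpa using dist_nonneg.trans (hdyadic 0 0 0 h0 0 h0)
  rcases hst.eq_or_lt with rfl | hlt
  · rw [dist_self]
    positivity
  obtain ⟨n, hn_lt, hn_le⟩ := exists_nat_pow_near_of_lt_one (sub_pos.2 hlt)
    (by linarith [hs.1, ht.2]) (by norm_num : (0 : ℝ) < 1 / 2) (by norm_num)
  calc dist (f s) (f t) ≤ 2 * (D * q ^ n) := dist_le_of_sub_le_half_pow hdyadic hs ht hst hn_le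
    _ = 2 * D / q * ((1 / 2) ^ (n + 1)) ^ (Real.log q / Real.log (1 / 2)) := by
      rw [rpow_log_div_log_half hq0]
      field_simp
      ring
    _ ≤ 2 * D / q * |s - t| ^ (Real.log q / Real.log (1 / 2)) := by
      rw [abs_sub_comm, abs_of_pos (sub_pos.2 hlt)]
      gcongr

end DyadicBound

theorem exists_dist_le_mul_abs_sub_rpow (hq0 : 0 < q) (hq1 : q ≤ 1)
    (hf : ContinuousOn f (Icc 0 1))
    (hleft : ∀ s ∈ Icc (0 : ℝ) 1, ∀ t ∈ Icc (0 : ℝ) 1,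
      dist (f (s / 2)) (f (t / 2)) ≤ q * dist (f s) (f t))
    (hright : ∀ s ∈ Icc (0 : ℝ) 1, ∀ t ∈ Icc (0 : ℝ) 1,
      dist (f ((s + 1) / 2)) (f ((t + 1) / 2)) ≤ q * dist (f s) (f t)) :
    ∃ C, ∀ s ∈ Icc (0 : ℝ) 1, ∀ t ∈ Icc (0 : ℝ) 1,
      dist (f s) (f t) ≤ C * |s - t| ^ (Real.log q / Real.log (1 / 2)) := by
  obtain ⟨D, hD⟩ := Metric.isBounded_iff.1 (isCompact_Icc.image_of_continuousOn hf).isBounded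
  have hdyadic := dist_le_of_mem_dyadicInterval hq0.le
    (fun s hs t ht => hD (mem_image_of_mem f hs) (mem_image_of_mem f ht)) hleft hright
  exact ⟨_, fun s hs t ht => dist_le_mul_abs_sub_rpow (fun n k s hs t ht => hdyadic n k hs ht)
    hq0 hq1 hs ht⟩

end SelfSimilar

lemma eq_of_comp_half_eq {Y : Type*} [TopologicalSpace Y] [T2Space Y] {g : ℝ → Y}
    (hg : ContinuousWithinAt g (Icc 0 1) 0) (hhalf : ∀ t ∈ Icc (0 : ℝ) 1, g (t / 2) = g t)
    {t : ℝ} (ht : t ∈ Icc 0 1) : g t = g 0 := by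
  have hmem (n : ℕ) : t / 2 ^ n ∈ Icc (0 : ℝ) 1 :=
    ⟨div_nonneg ht.1 (by positivity), (div_le_self ht.1 (one_le_pow₀ one_le_two)).trans ht.2⟩
  have hconst (n : ℕ) : g (t / 2 ^ n) = g t := by
    induction n with
    | zero => simp
    | succ n ih => rw [pow_succ, ← div_div, hhalf _ (hmem n), ih]
  have hlim : Filter.Tendsto (fun n : ℕ => t / 2 ^ n) Filter.atTop (nhdsWithin 0 (Icc 0 1)) :=
    tendsto_nhdsWithin_iff.2 ⟨tendsto_const_nhds.div_atTop
      (tendsto_pow_atTop_atTop_of_one_lt one_lt_two), Filter.Eventually.of_forall hmem⟩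
  have := hg.tendsto.comp hlim
  rw [show g ∘ (fun n : ℕ => t / 2 ^ n) = fun _ => g t from funext hconst] at this
  exact tendsto_nhds_unique tendsto_const_nhds this

open Matrix

lemma M0_mulVec (v : Fin 3 → ℝ) :
    M0 *ᵥ v = ![v 0 + (2 * v 1 + 2 * v 2) / 5, (2 * v 1 + v 2) / 5, (v 1 + 2 * v 2) / 5] := by
  ext i; fin_cases i <;> simp [M0, mulVec, dotProduct, Fin.sum_univ_three] <;> ring

lemma M1_mulVec (v : Fin 3 → ℝ) :
    M1 *ᵥ v = ![(2 * v 0 + v 2) / 5, v 1 + (2 * v 0 + 2 * v 2) / 5, (v 0 + 2 * v 2) / 5] := by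
  ext i; fin_cases i <;> simp [M1, mulVec, dotProduct, Fin.sum_univ_three] <;> ring

lemma sum_M0_mulVec (v : Fin 3 → ℝ) : ∑ i, (M0 *ᵥ v) i = ∑ i, v i := by
  simp only [M0_mulVec, Fin.sum_univ_three, cons_val_zero, cons_val_one, cons_val_two, tail_cons,
    head_cons]
  ring

lemma norm2_M0_mulVec_le {v : Fin 3 → ℝ} (hv : ∑ i, v i = 0) :
    norm2 (M0 *ᵥ v) ≤ 3 / 5 * norm2 v := by
  have hv0 : v 0 = -v 1 - v 2 := by simp only [Fin.sum_univ_three] at hv; linarith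
  rw [norm2, norm2, ← Real.sqrt_sq (by norm_num : (0 : ℝ) ≤ 3 / 5), ← Real.sqrt_mul (by positivity)]
  apply Real.sqrt_le_sqrt
  simp only [M0_mulVec, cons_val_zero, cons_val_one, cons_val_two, tail_cons, head_cons, hv0]
  -- the two sides differ by `4 (v 1 - v 2) ^ 2 / 25`
  nlinarith [sq_nonneg (v 1 - v 2)]

lemma norm2_M1_mulVec_le {v : Fin 3 → ℝ} (hv : ∑ i, v i = 0) :
    norm2 (M1 *ᵥ v) ≤ 3 / 5 * norm2 v := by
  have hv1 : v 1 = -v 0 - v 2 := by simp only [Fin.sum_univ_three] at hv; linarith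
  rw [norm2, norm2, ← Real.sqrt_sq (by norm_num : (0 : ℝ) ≤ 3 / 5), ← Real.sqrt_mul (by positivity)]
  apply Real.sqrt_le_sqrt
  simp only [M1_mulVec, cons_val_zero, cons_val_one, cons_val_two, tail_cons, head_cons, hv1]
  nlinarith [sq_nonneg (v 0 - v 2)]

lemma norm2_sub_eq_dist (v w : Fin 3 → ℝ) :
    norm2 (v - w) = dist (WithLp.toLp 2 v) (WithLp.toLp 2 w) := by
  simp [norm2, EuclideanSpace.dist_eq, Fin.sum_univ_three, Real.dist_eq, sq_abs]

theorem stmt_16_general (u : ℝ → (Fin 3 → ℝ))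
    (hcont : ContinuousOn u (Set.Icc 0 1))
    (hrec0 : ∀ t ∈ Set.Icc (0:ℝ) 1, u (t / 2) = M0.mulVec (u t))
    (hrec1 : ∀ t ∈ Set.Icc (0:ℝ) 1, u ((t + 1) / 2) = M1.mulVec (u t)) :
    ∃ C : ℝ, ∀ s ∈ Set.Icc (0:ℝ) 1, ∀ t ∈ Set.Icc (0:ℝ) 1,
      norm2 (u s - u t) ≤
        C * |s - t| ^ (Real.log (3/5) / Real.log (1/2)) := by
  have hsum {t : ℝ} (ht : t ∈ Icc (0 : ℝ) 1) : ∑ i, u t i = ∑ i, u 0 i :=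
    eq_of_comp_half_eq (g := fun t => ∑ i, u t i)
      ((continuous_finsetSum _ fun i _ => continuous_apply i).continuousAt.comp_continuousWithinAt
        (hcont 0 ⟨le_rfl, zero_le_one⟩))
      (fun t ht => by simp only [hrec0 t ht, sum_M0_mulVec]) ht
  have hdiff {s t : ℝ} (hs : s ∈ Icc (0 : ℝ) 1) (ht : t ∈ Icc (0 : ℝ) 1) :
      ∑ i, (u s - u t) i = 0 := by
    simp only [Pi.sub_apply, Finset.sum_sub_distrib, hsum hs, hsum ht, sub_self]
  obtain ⟨C, hC⟩ := exists_dist_le_mul_abs_sub_rpow (f := fun t => WithLp.toLp 2 (u t))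
    (q := 3 / 5) (by norm_num) (by norm_num) ((PiLp.continuous_toLp 2 _).comp_continuousOn hcont)
    (fun s hs t ht => by
      simp only [← norm2_sub_eq_dist, hrec0 s hs, hrec0 t ht, ← mulVec_sub]
      exact norm2_M0_mulVec_le (hdiff hs ht))
    (fun s hs t ht => by
      simp only [← norm2_sub_eq_dist, hrec1 s hs, hrec1 t ht, ← mulVec_sub]
      exact norm2_M1_mulVec_le (hdiff hs ht))
  exact ⟨C, fun s hs t ht => (norm2_sub_eq_dist _ _).trans_le (hC s hs t ht)⟩

theorem stmt_16 (u : ℝ → (Fin 3 → ℝ))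
    (hcont : ContinuousOn u (Set.Icc 0 1))
    (h0 : u 0 = ![1, 0, 0]) (h1 : u 1 = ![0, 1, 0])
    (hrec0 : ∀ t ∈ Set.Icc (0:ℝ) 1, u (t / 2) = M0.mulVec (u t))
    (hrec1 : ∀ t ∈ Set.Icc (0:ℝ) 1, u ((t + 1) / 2) = M1.mulVec (u t)) :
    ∃ C : ℝ, ∀ s ∈ Set.Icc (0:ℝ) 1, ∀ t ∈ Set.Icc (0:ℝ) 1,
      norm2 (u s - u t) ≤
        C * |s - t| ^ (Real.log (3/5) / Real.log (1/2)) :=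
  stmt_16_general u hcont hrec0 hrec1
end

section
/- Let u: [0,1] → ℝ³ be the unique continuous function with u(0) = (1,0,0), u(1) = (0,1,0), u(t/2) = M_0·u(t), u((t+1)/2) = M_1·u(t). Then for all s < t in [0,1], the vector u(t) − u(s) lies in the cone K⃗ = {a·v⃗_0 + b·v⃗_1 : a,b ≥ 0, (a,b) ≠ (0,0)} with v⃗_0 = (-1,1/2,1/2), v⃗_1 = (-1/2,1,-1/2); in particular, u is injective. -/
noncomputable def v0 : Fin 3 → ℝ := ![-1, 1/2, 1/2]
noncomputable def v1 : Fin 3 → ℝ := ![-1/2, 1, -1/2]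

noncomputable def Kvec : Set (Fin 3 → ℝ) :=
  {u | ∃ a b : ℝ, 0 ≤ a ∧ 0 ≤ b ∧ (a, b) ≠ (0, 0) ∧ u = a • v0 + b • v1}

/-- `u` is a continuous function on `[0,1]` satisfying the boundary conditions
and the self-similarity relations. -/
def IsHarmonicSide (u : ℝ → (Fin 3 → ℝ)) : Prop :=
  ContinuousOn u (Set.Icc 0 1) ∧
  u 0 = ![1, 0, 0] ∧ u 1 = ![0, 1, 0] ∧
  (∀ t ∈ Set.Icc (0:ℝ) 1, u (t / 2) = M0.mulVec (u t)) ∧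
  (∀ t ∈ Set.Icc (0:ℝ) 1, u ((t + 1) / 2) = M1.mulVec (u t))

/-!
In the basis `v0, v1` of the plane `x + y + z = 0`, `M0` acts by `(a, b) ↦ ((3a + b)/5, b/5)` and
`M1` by `(a, b) ↦ (a/5, (a + 3b)/5)`, so both send the punctured cone `Kvec` into itself. Since
`u 1 - u 0 = (2/3)(v0 + v1)`, the self-similarity relations and induction on `n` put the increment
of `u` over every dyadic interval `[j/2^n, (j+1)/2^n]` in `Kvec`, and sums of such increments stay
there. By continuity every increment `u t - u s` with `s ≤ t` lies in the closed cone `Kvec ∪ {0}`;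
if `s < t`, it is the increment over a dyadic interval inside `[s, t]` plus two increments
in `Kvec ∪ {0}`, hence lies in `Kvec`. As `0 ∉ Kvec`, `u` is injective.
-/

open Set Filter Topology Matrix

lemma smul_v0_add_smul_v1 (a b : ℝ) :
    a • v0 + b • v1 = ![-a - b / 2, a / 2 + b, a / 2 - b / 2] := by
  ext i; fin_cases i <;> simp [v0, v1] <;> ring

lemma mem_Kvec_iff {w : Fin 3 → ℝ} :
    w ∈ Kvec ↔ ∃ a b : ℝ, 0 ≤ a ∧ 0 ≤ b ∧ 0 < a + b ∧ w = a • v0 + b • v1 := by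
  refine exists₂_congr fun a b => and_congr_right fun ha => and_congr_right fun hb => ?_
  rw [Ne, Prod.mk.injEq]
  constructor
  · rintro ⟨hab, rfl⟩
    exact ⟨by contrapose! hab; constructor <;> linarith, rfl⟩
  · rintro ⟨hab, rfl⟩
    exact ⟨by rintro ⟨rfl, rfl⟩; simp at hab, rfl⟩

lemma zero_notMem_Kvec : (0 : Fin 3 → ℝ) ∉ Kvec := by
  rintro ⟨a, b, -, -, hab, h⟩
  rw [smul_v0_add_smul_v1] at h
  have h1 := congrFun h 1
  have h2 := congrFun h 2
  simp only [Pi.zero_apply, cons_val] at h1 h2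
  exact hab (Prod.ext (by linarith) (by linarith))

lemma add_mem_Kvec {x y : Fin 3 → ℝ} (hx : x ∈ Kvec) (hy : y ∈ Kvec) : x + y ∈ Kvec := by
  obtain ⟨a, b, ha, hb, hab, rfl⟩ := mem_Kvec_iff.mp hx
  obtain ⟨c, d, hc, hd, hcd, rfl⟩ := mem_Kvec_iff.mp hy
  exact mem_Kvec_iff.mpr ⟨a + c, b + d, by linarith, by linarith, by linarith, by module⟩

lemma add_mem_Kvec_of_mem_insert {x y : Fin 3 → ℝ} (hx : x ∈ insert 0 Kvec) (hy : y ∈ Kvec) :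
    x + y ∈ Kvec := by
  rcases hx with rfl | hx
  · rwa [zero_add]
  · exact add_mem_Kvec hx hy

lemma insert_zero_Kvec_eq :
    insert 0 Kvec = {w : Fin 3 → ℝ | w 0 + w 1 + w 2 = 0 ∧ 0 ≤ w 1 + 2 * w 2 ∧ w 2 ≤ w 1} := by
  ext w
  simp only [mem_insert_iff, mem_Kvec_iff, mem_ofPred]
  constructor
  · rintro (rfl | ⟨a, b, ha, hb, -, rfl⟩)
    · simp
    · simp only [smul_v0_add_smul_v1, cons_val]
      exact ⟨by ring, by linarith, by linarith⟩
  · rintro ⟨h0, h1, h2⟩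
    obtain hab | hab := (add_nonneg h1 (sub_nonneg.2 h2)).eq_or_lt
    · left
      ext i; fin_cases i <;> simp <;> linarith
    · refine Or.inr ⟨2 / 3 * (w 1 + 2 * w 2), 2 / 3 * (w 1 - w 2), by linarith, by linarith,
        by linarith, ?_⟩
      rw [smul_v0_add_smul_v1]
      ext i; fin_cases i <;> simp <;> linarith

lemma isClosed_insert_zero_Kvec : IsClosed (insert 0 Kvec) := by
  rw [insert_zero_Kvec_eq, ofPred_and, ofPred_and]
  exact (isClosed_eq (by fun_prop) continuous_const).inter
    ((isClosed_le continuous_const (by fun_prop)).inter (isClosed_le (by fun_prop) (by fun_prop)))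

lemma M0_mulVec_v0 : M0 *ᵥ v0 = (3 / 5 : ℝ) • v0 := by
  ext i; fin_cases i <;> simp [M0, v0, mulVec, dotProduct, Fin.sum_univ_three] <;> norm_num

lemma M0_mulVec_v1 : M0 *ᵥ v1 = (1 / 5 : ℝ) • (v0 + v1) := by
  ext i; fin_cases i <;> simp [M0, v0, v1, mulVec, dotProduct, Fin.sum_univ_three] <;> norm_num

lemma M1_mulVec_v0 : M1 *ᵥ v0 = (1 / 5 : ℝ) • (v0 + v1) := by
  ext i; fin_cases i <;> simp [M1, v0, v1, mulVec, dotProduct, Fin.sum_univ_three] <;> norm_num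

lemma M1_mulVec_v1 : M1 *ᵥ v1 = (3 / 5 : ℝ) • v1 := by
  ext i; fin_cases i <;> simp [M1, v1, mulVec, dotProduct, Fin.sum_univ_three] <;> norm_num

lemma M0_mulVec_mem_Kvec {w : Fin 3 → ℝ} (hw : w ∈ Kvec) : M0 *ᵥ w ∈ Kvec := by
  obtain ⟨a, b, ha, hb, hab, rfl⟩ := mem_Kvec_iff.mp hw
  refine mem_Kvec_iff.mpr ⟨(3 * a + b) / 5, b / 5, by positivity, by positivity, by linarith, ?_⟩
  simp only [mulVec_add, mulVec_smul, M0_mulVec_v0, M0_mulVec_v1]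
  module

lemma M1_mulVec_mem_Kvec {w : Fin 3 → ℝ} (hw : w ∈ Kvec) : M1 *ᵥ w ∈ Kvec := by
  obtain ⟨a, b, ha, hb, hab, rfl⟩ := mem_Kvec_iff.mp hw
  refine mem_Kvec_iff.mpr ⟨a / 5, (a + 3 * b) / 5, by positivity, by positivity, by linarith, ?_⟩
  simp only [mulVec_add, mulVec_smul, M1_mulVec_v0, M1_mulVec_v1]
  module

lemma sub_mem_of_forall_succ_sub_mem {E : Type*} [AddCommGroup E] {S : Set E}
    (hS : ∀ x ∈ S, ∀ y ∈ S, x + y ∈ S) {f : ℕ → E} {j k : ℕ}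
    (h : ∀ i, j ≤ i → i < k → f (i + 1) - f i ∈ S) (hjk : j < k) : f k - f j ∈ S := by
  induction k, hjk using Nat.le_induction with
  | base => exact h j le_rfl (Nat.lt_succ_self j)
  | succ k hjk ih =>
    rw [← sub_add_sub_cancel (f (k + 1)) (f k) (f j)]
    exact hS _ (h k (by omega) (by omega)) _ (ih fun i hji hik => h i hji (by omega))

lemma natCast_div_two_pow_mem_Icc_iff {k n : ℕ} : (k / 2 ^ n : ℝ) ∈ Icc 0 1 ↔ k ≤ 2 ^ n := by
  rw [mem_Icc, div_le_one (by positivity)]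
  exact ⟨fun h => mod_cast h.2, fun h => ⟨by positivity, mod_cast h⟩⟩

lemma natCast_div_two_pow_succ (k n : ℕ) : (k / 2 ^ (n + 1) : ℝ) = k / 2 ^ n / 2 := by
  rw [pow_succ, div_div]

lemma natCast_add_div_two_pow_succ (k n : ℕ) :
    ((2 ^ n + k : ℕ) / 2 ^ (n + 1) : ℝ) = (k / 2 ^ n + 1) / 2 := by
  push_cast
  field_simp
  ring

lemma Nat.floor_mul_two_pow_le {x : ℝ} (hx : x ≤ 1) (n : ℕ) : ⌊x * 2 ^ n⌋₊ ≤ 2 ^ n :=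
  Nat.floor_le_of_le (by simpa using mul_le_mul_of_nonneg_right hx (by positivity : (0:ℝ) ≤ 2 ^ n))

lemma tendsto_floor_mul_two_pow_div {x : ℝ} (hx : 0 ≤ x) :
    Tendsto (fun n : ℕ => (⌊x * 2 ^ n⌋₊ / 2 ^ n : ℝ)) atTop (𝓝 x) :=
  (tendsto_nat_floor_mul_div_atTop hx).comp (tendsto_pow_atTop_atTop_of_one_lt one_lt_two)

lemma sub_mem_of_dyadic_sub_mem {E : Type*} [TopologicalSpace E] [Sub E] [ContinuousSub E]
    {C : Set E} (hC : IsClosed C) {u : ℝ → E} (hu : ContinuousOn u (Icc 0 1))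
    (h : ∀ n j k : ℕ, j ≤ k → k ≤ 2 ^ n → u (k / 2 ^ n) - u (j / 2 ^ n) ∈ C)
    {s t : ℝ} (hs : s ∈ Icc 0 1) (ht : t ∈ Icc 0 1) (hst : s ≤ t) : u t - u s ∈ C := by
  have approx : ∀ x ∈ Icc (0 : ℝ) 1,
      Tendsto (fun n : ℕ => u (⌊x * 2 ^ n⌋₊ / 2 ^ n)) atTop (𝓝 (u x)) := fun x hx =>
    (hu x hx).tendsto.comp <| tendsto_nhdsWithin_iff.mpr ⟨tendsto_floor_mul_two_pow_div hx.1,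
      .of_forall fun n => natCast_div_two_pow_mem_Icc_iff.mpr (Nat.floor_mul_two_pow_le hx.2 n)⟩
  refine hC.mem_of_tendsto ((approx t ht).sub (approx s hs)) (.of_forall fun n => ?_)
  exact h n _ _ (Nat.floor_le_floor (by gcongr)) (Nat.floor_mul_two_pow_le ht.2 n)

lemma exists_dyadic_interval_subset {s t : ℝ} (hs : 0 ≤ s) (hst : s < t) :
    ∃ n j : ℕ, s ≤ j / 2 ^ n ∧ ((j + 1 : ℕ) / 2 ^ n : ℝ) ≤ t := by
  obtain ⟨n, hn⟩ := pow_unbounded_of_one_lt (2 / (t - s)) one_lt_two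
  have h2n : (0 : ℝ) < 2 ^ n := by positivity
  have hgap : 2 < (t - s) * 2 ^ n := by rwa [div_lt_iff₀' (by linarith)] at hn
  have hceil := Nat.ceil_lt_add_one (by positivity : 0 ≤ s * 2 ^ n)
  refine ⟨n, ⌈s * 2 ^ n⌉₊, (le_div_iff₀ h2n).mpr (Nat.le_ceil _), ?_⟩
  rw [div_le_iff₀ h2n]
  push_cast
  linarith

namespace IsHarmonicSide

variable {u : ℝ → Fin 3 → ℝ}

lemma consecutive_dyadic_sub_mem_Kvec (hu : IsHarmonicSide u) (n : ℕ) :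
    ∀ j < 2 ^ n, u ((j + 1 : ℕ) / 2 ^ n) - u (j / 2 ^ n) ∈ Kvec := by
  obtain ⟨-, h0, h1, hM0, hM1⟩ := hu
  induction n with
  | zero =>
    intro j hj
    obtain rfl : j = 0 := by simpa using hj
    refine mem_Kvec_iff.mpr ⟨2 / 3, 2 / 3, by norm_num, by norm_num, by norm_num, ?_⟩
    simp only [Nat.cast_zero, zero_add, Nat.cast_one, pow_zero, div_one, h0, h1,
      smul_v0_add_smul_v1]
    ext i; fin_cases i <;> norm_num
  | succ n ih =>
    intro j hj
    have mem {k : ℕ} (hk : k ≤ 2 ^ n) := natCast_div_two_pow_mem_Icc_iff.mpr hk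
    rcases lt_or_ge j (2 ^ n) with hjn | hjn
    · rw [natCast_div_two_pow_succ, natCast_div_two_pow_succ, hM0 _ (mem hjn), hM0 _ (mem hjn.le),
        ← mulVec_sub]
      exact M0_mulVec_mem_Kvec (ih j hjn)
    · obtain ⟨i, rfl⟩ := Nat.exists_eq_add_of_le hjn
      have hi : i < 2 ^ n := by rw [pow_succ] at hj; omega
      rw [add_assoc, natCast_add_div_two_pow_succ, natCast_add_div_two_pow_succ, hM1 _ (mem hi),
        hM1 _ (mem hi.le), ← mulVec_sub]
      exact M1_mulVec_mem_Kvec (ih i hi)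

lemma dyadic_sub_mem_Kvec (hu : IsHarmonicSide u) {n j k : ℕ} (hjk : j < k) (hk : k ≤ 2 ^ n) :
    u (k / 2 ^ n) - u (j / 2 ^ n) ∈ Kvec :=
  sub_mem_of_forall_succ_sub_mem (fun _ hx _ hy => add_mem_Kvec hx hy)
    (f := fun m : ℕ => u (m / 2 ^ n))
    (fun i _ hik => hu.consecutive_dyadic_sub_mem_Kvec n i (by omega)) hjk

lemma sub_mem_insert_zero_Kvec (hu : IsHarmonicSide u) {s t : ℝ} (hs : s ∈ Icc 0 1)
    (ht : t ∈ Icc 0 1) (hst : s ≤ t) :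
    u t - u s ∈ insert 0 Kvec := by
  refine sub_mem_of_dyadic_sub_mem isClosed_insert_zero_Kvec hu.1 (fun n j k hjk hk => ?_) hs ht hst
  rcases hjk.eq_or_lt with rfl | hjk
  · exact Or.inl (sub_self _)
  · exact Or.inr (hu.dyadic_sub_mem_Kvec hjk hk)

lemma sub_mem_Kvec (hu : IsHarmonicSide u) {s t : ℝ} (hs : s ∈ Icc 0 1)
    (ht : t ∈ Icc 0 1) (hst : s < t) :
    u t - u s ∈ Kvec := by
  obtain ⟨n, j, hsj, hjt⟩ := exists_dyadic_interval_subset hs.1 hst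
  have hj : j + 1 ≤ 2 ^ n := natCast_div_two_pow_mem_Icc_iff.mp ⟨by positivity, hjt.trans ht.2⟩
  have mem {k : ℕ} (hk : k ≤ 2 ^ n) := natCast_div_two_pow_mem_Icc_iff.mpr hk
  set p : ℝ := j / 2 ^ n
  set q : ℝ := (j + 1 : ℕ) / 2 ^ n
  rw [show u t - u s = (u t - u q) + ((u p - u s) + (u q - u p)) by abel]
  exact add_mem_Kvec_of_mem_insert (hu.sub_mem_insert_zero_Kvec (mem hj) ht hjt) <|
    add_mem_Kvec_of_mem_insert (hu.sub_mem_insert_zero_Kvec hs (mem (by omega)) hsj)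
      (hu.dyadic_sub_mem_Kvec (Nat.lt_succ_self j) hj)

end IsHarmonicSide

theorem stmt_19 (u : ℝ → (Fin 3 → ℝ)) (hu : IsHarmonicSide u) :
    (∀ s ∈ Set.Icc (0:ℝ) 1, ∀ t ∈ Set.Icc (0:ℝ) 1, s < t →
      u t - u s ∈ Kvec) ∧
    Set.InjOn u (Set.Icc 0 1) := by
  have hK : ∀ s ∈ Icc (0 : ℝ) 1, ∀ t ∈ Icc (0 : ℝ) 1, s < t → u t - u s ∈ Kvec :=
    fun s hs t ht hst => hu.sub_mem_Kvec hs ht hst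
  refine ⟨hK, fun s hs t ht hst => ?_⟩
  by_contra hne
  rcases lt_or_gt_of_ne hne with h | h
  · exact zero_notMem_Kvec (by simpa [hst] using hK s hs t ht h)
  · exact zero_notMem_Kvec (by simpa [hst] using hK t ht s hs h)
end
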